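/- Let R be a ring and S a subset of R satisfying: (i) if ab ∈ S then a ∈ S; (ii) S is a right Ore set; (iii) every element of S is regular; (iv) Q := R[S⁻¹] is directly finite; set K := Q/R. Let M be a torsion-free right R-module, M̃ := lim←_{s∈S} M/U(s) its Hausdorff completion in the R-topology, and η : M → M̃ the canonical map. Then there exists an injective right R-module homomorphism λ̃ : M̃ → Hom_R(K, M ⊗_R K) such that λ = λ̃ ∘ η, where λ : M → Hom_R(K, M ⊗_R K) is the canonical map λ(x)(k) = x ⊗ k. -/

import Mathlib

/-!
STATEMENT 4: Let R be a ring and S a subset of R satisfying: (i) if ab ∈ S then a ∈ S;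
(ii) S is a right Ore set; (iii) every element of S is regular; (iv) Q := R[S⁻¹] is
directly finite; set K := Q/R. Let M be a torsion-free right R-module,
M̃ := lim←_{s∈S} M/U(s) its Hausdorff completion in the R-topology, and η : M → M̃ the
canonical map. Then there exists an injective right R-module homomorphism
λ̃ : M̃ → Hom_R(K, M ⊗_R K) such that λ = λ̃ ∘ η.

Right `R`-modules are left `Rᵐᵒᵖ`-modules; the localization `Q`, the module `K := Q/R`
with its left `R`-action `lmulK`, and the tensor product `T = M ⊗_R K` (axiomatized by its
universal property) are as in the accompanying formalizations.  The completion
`M̃ = lim←_{s∈S} M/U(s)` is the submodule of compatible families of `∏_{s∈S} M/U(s)`.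
The right `R`-module structure on `H = Hom_R(K, T)` is `(f·r) = f ∘ lmulK r`; that `λ̃` is
a homomorphism of right `R`-modules is expressed by additivity together with
`λ̃(x·r) = λ̃(x) ∘ lmulK r`.
-/

universe u
open MulOpposite

section Setting

variable (R Q : Type u) [Ring R] [Ring Q] (φ : R →+* Q) [Module Rᵐᵒᵖ Q]
variable (hsmul : ∀ (q : Q) (r : R), op r • q = q * φ r)

/-- The image of `R` in `Q`, as a right `R`-submodule of `Q`. -/
def rsub : Submodule Rᵐᵒᵖ Q where
  carrier := Set.range φ
  zero_mem' := ⟨0, map_zero φ⟩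
  add_mem' := by rintro _ _ ⟨a, rfl⟩ ⟨b, rfl⟩; exact ⟨a + b, map_add φ a b⟩
  smul_mem' := by
    rintro c _ ⟨a, rfl⟩
    refine ⟨a * c.unop, ?_⟩
    rw [map_mul, ← hsmul (φ a) c.unop, op_unop]

/-- `K := Q/R` as a right `R`-module. -/
abbrev kmod := Q ⧸ rsub R Q φ hsmul

/-- Left multiplication by `φ r` on `Q`, as an endomorphism of the right `R`-module `Q`. -/
def lmulQ (r : R) : Q →ₗ[Rᵐᵒᵖ] Q where
  toFun q := φ r * q
  map_add' a b := mul_add _ a b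
  map_smul' c q := by
    simp only [RingHom.id_apply]
    rw [← op_unop c, hsmul, hsmul, mul_assoc]

/-- The left action of `r ∈ R` on `K = Q/R`. -/
def lmulK (r : R) : kmod R Q φ hsmul →ₗ[Rᵐᵒᵖ] kmod R Q φ hsmul :=
  Submodule.mapQ _ _ (lmulQ R Q φ hsmul r) (by
    rintro _ ⟨a, rfl⟩
    exact ⟨r * a, by simp [lmulQ, map_mul]⟩)

variable (M : Type u) [AddCommGroup M] [Module Rᵐᵒᵖ M]

/-- `U(s) = {x ∈ M | xR ⊆ Ms}`, a submodule of the right `R`-module `M`. -/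
def usub (s : R) : Submodule Rᵐᵒᵖ M where
  carrier := {x | ∀ r : R, ∃ m : M, op r • x = op s • m}
  zero_mem' := fun r => ⟨0, by simp⟩
  add_mem' := by
    rintro x y hx hy r
    obtain ⟨m, hm⟩ := hx r
    obtain ⟨m', hm'⟩ := hy r
    exact ⟨m + m', by rw [smul_add, smul_add, hm, hm']⟩
  smul_mem' := by
    rintro c x hx r
    obtain ⟨m, hm⟩ := hx (c.unop * r)
    refine ⟨m, ?_⟩
    have key : op r * c = op (c.unop * r) := by rw [op_mul, op_unop]
    rw [smul_smul, key]
    exact hm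

/-- The factor map `M/p → M/q` for `p ≤ q`. -/
def factorQ {p q : Submodule Rᵐᵒᵖ M} (h : p ≤ q) : (M ⧸ p) →ₗ[Rᵐᵒᵖ] (M ⧸ q) :=
  Submodule.mapQ p q LinearMap.id fun x hx => h hx

variable (S : Submonoid R)

/-- The Hausdorff completion `M̃ = lim←_{s∈S} M/U(s)` of `M` in its `R`-topology, as the
submodule of compatible families in the product `∏_{s∈S} M/U(s)`. -/
def ucompletionSub : Submodule Rᵐᵒᵖ (∀ s : S, M ⧸ usub R M (s : R)) where
  carrier := {x | ∀ (s t : S) (h : usub R M (t : R) ≤ usub R M (s : R)),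
    factorQ R M h (x t) = x s}
  zero_mem' := by intro s t h; simp
  add_mem' := by
    intro x y hx hy s t h
    simp only [Pi.add_apply, map_add, hx s t h, hy s t h]
  smul_mem' := by
    intro c x hx s t h
    simp only [Pi.smul_apply, map_smul, hx s t h]

/-- The canonical map `η : M → M̃`. -/
def etaFun : M → ucompletionSub R M S := fun x =>
  ⟨fun _ => Submodule.Quotient.mk x, by
    intro s t h
    simp [factorQ, Submodule.mapQ_apply]⟩

variable (T : Type u) [AddCommGroup T] [Module Rᵐᵒᵖ T]
variable (β : M → kmod R Q φ hsmul → T)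
variable (hβ2 : ∀ x k k', β x (k + k') = β x k + β x k')
variable (hlin : ∀ (x : M) (r : R) (k : kmod R Q φ hsmul), β x (op r • k) = op r • β x k)

/-- The canonical map `λ : M → Hom_R(K, M ⊗_R K)`, `λ(x)(k) = x ⊗ k`. -/
def lam : M → (kmod R Q φ hsmul →ₗ[Rᵐᵒᵖ] T) := fun x =>
  { toFun := β x
    map_add' := hβ2 x
    map_smul' := fun c k => by
      simp only [RingHom.id_apply]
      rw [← op_unop c]
      exact hlin x c.unop k }

end Setting

section Aux
variable {R : Type u} [Ring R]

instance sPre {S : Submonoid R} : Preorder ↥S where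
  le s t := ∃ a : R, (t : R) = (s : R) * a
  le_refl s := ⟨1, (mul_one _).symm⟩
  le_trans := by rintro s t u ⟨a, ha⟩ ⟨b, hb⟩; exact ⟨a * b, by rw [hb, ha, mul_assoc]⟩

variable {M : Type u} [AddCommGroup M] [Module Rᵐᵒᵖ M]

theorem opsmul (a b : R) (x : M) : op (a * b) • x = op b • (op a • x) := by
  rw [op_mul, mul_smul]

/-- The subgroup `M·s` of a right module. -/
def msub (M : Type u) [AddCommGroup M] [Module Rᵐᵒᵖ M] (s : R) : AddSubgroup M where
  carrier := Set.range fun m : M => op s • m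
  zero_mem' := ⟨0, smul_zero _⟩
  add_mem' := by rintro _ _ ⟨a, rfl⟩ ⟨b, rfl⟩; exact ⟨a + b, smul_add _ _ _⟩
  neg_mem' := by rintro _ ⟨a, rfl⟩; exact ⟨-a, smul_neg _ _⟩

/-- Transition maps of the directed system `s ↦ M/Ms`. -/
noncomputable def tfam (S : Submonoid R) (M : Type u) [AddCommGroup M] [Module Rᵐᵒᵖ M] :
    ∀ s t : ↥S, s ≤ t → (M ⧸ msub M (s : R)) →+ (M ⧸ msub M (t : R)) := fun s t h =>
  QuotientAddGroup.map _ _ (DistribMulAction.toAddMonoidHom M (op h.choose)) (by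
    rintro _ ⟨m, rfl⟩
    refine ⟨m, ?_⟩
    show op (t : R) • m = op h.choose • (op (s : R) • m)
    rw [← opsmul, ← h.choose_spec])

theorem tfam_mk (S : Submonoid R) (hreg : ∀ s ∈ S, IsRegular s) {s t : ↥S} (h : s ≤ t)
    (a : R) (ha : (t : R) = (s : R) * a) (m : M) :
    tfam S M s t h (QuotientAddGroup.mk m) = QuotientAddGroup.mk (op a • m) := by
  have h2 : (t : R) = (s : R) * h.choose := h.choose_spec
  have : h.choose = a := (hreg _ s.2).left (show (s : R) * h.choose = (s : R) * a by
    rw [← h2, ← ha])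
  rw [← this]
  rfl

theorem sdirected (S : Submonoid R)
    (hOre : ∀ (r : R), ∀ s ∈ S, ∃ (r' s' : R), s' ∈ S ∧ r * s' = s * r') :
    IsDirected ↥S (· ≤ ·) := by
  constructor
  intro s t
  obtain ⟨r', s', hs', h⟩ := hOre (s : R) (t : R) t.2
  exact ⟨⟨(s : R) * s', S.mul_mem s.2 hs'⟩, ⟨s', rfl⟩, ⟨r', h⟩⟩

theorem dirsys (S : Submonoid R) (hreg : ∀ s ∈ S, IsRegular s) :
    DirectedSystem (fun s : ↥S => M ⧸ msub M (s : R)) (fun s t h => tfam S M s t h) where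
  map_self := by
    intro s x
    induction x using QuotientAddGroup.induction_on with
    | H m => rw [tfam_mk S hreg le_rfl 1 (mul_one _).symm]; simp
  map_map := by
    intro k j i hij hjk x
    induction x using QuotientAddGroup.induction_on with
    | H m =>
      obtain ⟨a, ha⟩ := id hij
      obtain ⟨b, hb⟩ := id hjk
      rw [tfam_mk S hreg hij a ha, tfam_mk S hreg hjk b hb,
        tfam_mk S hreg (hij.trans hjk) (a * b) (by rw [hb, ha, mul_assoc]), opsmul]

/-- The direct limit `colim_s M/Ms`, a concrete realization of `M ⊗ K`. -/
noncomputable def ALim (S : Submonoid R) (M : Type u) [AddCommGroup M] [Module Rᵐᵒᵖ M] :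
    Type u :=
  letI := Classical.decEq ↥S
  AddCommGroup.DirectLimit (fun s : ↥S => M ⧸ msub M (s : R)) (tfam S M)

noncomputable instance (S : Submonoid R) : AddCommGroup (ALim S M) :=
  letI := Classical.decEq ↥S
  (inferInstance : AddCommGroup (AddCommGroup.DirectLimit (fun s : ↥S => M ⧸ msub M (s : R))
    (tfam S M)))

/-- Canonical map into the direct limit. -/
noncomputable def AOf (S : Submonoid R) (M : Type u) [AddCommGroup M] [Module Rᵐᵒᵖ M]
    (s : ↥S) : (M ⧸ msub M (s : R)) →+ ALim S M :=
  letI := Classical.decEq ↥S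
  AddCommGroup.DirectLimit.of (fun s : ↥S => M ⧸ msub M (s : R)) (tfam S M) s

theorem AOf_f (S : Submonoid R) {s t : ↥S} (h : s ≤ t) (x : M ⧸ msub M (s : R)) :
    AOf S M t (tfam S M s t h x) = AOf S M s x := by
  letI := Classical.decEq ↥S
  exact AddCommGroup.DirectLimit.of_f (G := fun s : ↥S => M ⧸ msub M (s : R)) (f := tfam S M) h x

theorem AOf_zero_exact (S : Submonoid R) (hreg : ∀ s ∈ S, IsRegular s)
    (hOre : ∀ (r : R), ∀ s ∈ S, ∃ (r' s' : R), s' ∈ S ∧ r * s' = s * r')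
    {s : ↥S} {x : M ⧸ msub M (s : R)} (h : AOf S M s x = 0) :
    ∃ t hst, tfam S M s t hst x = 0 := by
  letI := Classical.decEq ↥S
  haveI := sdirected S hOre
  haveI := dirsys (M := M) S hreg
  exact AddCommGroup.DirectLimit.of.zero_exact (G := fun s : ↥S => M ⧸ msub M (s : R)) (f := tfam S M) s x h

end Aux


section Aux2

variable {R Q : Type u} [Ring R] [Ring Q] (φ : R →+* Q) [Module Rᵐᵒᵖ Q]
variable (hsmul : ∀ (q : Q) (r : R), op r • q = q * φ r)
variable {S : Submonoid R}

theorem isUnit_right_of_isUnit_mul {x y : Q} (hxy : IsUnit (x * y)) (hx : IsUnit x) :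
    IsUnit y := by
  obtain ⟨w, hw⟩ := hx
  have : y = ↑w⁻¹ * (x * y) := by rw [← mul_assoc, ← hw, Units.inv_mul, one_mul]
  rw [this]
  exact (Units.isUnit _).mul hxy

theorem memS_of_isUnit (hsat : ∀ a b : R, a * b ∈ S → a ∈ S)
    (hinj : Function.Injective φ)
    (hfrac : ∀ q : Q, ∃ (r : R) (s : R), s ∈ S ∧ q * φ s = φ r)
    {a : R} (h : IsUnit (φ a)) : a ∈ S := by
  obtain ⟨r₂, s₂, hs₂, hv⟩ := hfrac ↑h.unit⁻¹
  have h1 : φ s₂ = φ (a * r₂) := by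
    rw [map_mul, ← hv, ← mul_assoc, h.mul_val_inv, one_mul]
  exact hsat a r₂ (by rwa [← hinj h1])

theorem smul_mk_k (r : R) (q : Q) :
    op r • (Submodule.Quotient.mk q : kmod R Q φ hsmul) = Submodule.Quotient.mk (q * φ r) := by
  rw [← hsmul]
  exact (Submodule.Quotient.mk_smul _ _ _).symm

theorem lmulK_mk (r : R) (q : Q) :
    lmulK R Q φ hsmul r (Submodule.Quotient.mk q) = Submodule.Quotient.mk (φ r * q) := by
  unfold lmulK
  rw [Submodule.mapQ_apply]
  rfl

theorem mk_one_k : (Submodule.Quotient.mk (1 : Q) : kmod R Q φ hsmul) = 0 :=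
  (Submodule.Quotient.mk_eq_zero _).2 ⟨1, map_one φ⟩

theorem kdata (hfrac : ∀ q : Q, ∃ (r : R) (s : R), s ∈ S ∧ q * φ s = φ r)
    (k : kmod R Q φ hsmul) :
    ∃ (q : Q) (r : R) (s : ↥S), Submodule.Quotient.mk q = k ∧ q * φ (s : R) = φ r := by
  obtain ⟨q, rfl⟩ := Submodule.Quotient.mk_surjective _ k
  obtain ⟨r, s, hs, h⟩ := hfrac q
  exact ⟨q, r, ⟨s, hs⟩, rfl, h⟩

theorem hKtor (hfrac : ∀ q : Q, ∃ (r : R) (s : R), s ∈ S ∧ q * φ s = φ r)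
    (k : kmod R Q φ hsmul) : ∃ s : ↥S, op (s : R) • k = 0 := by
  obtain ⟨q, r, s, rfl, h⟩ := kdata φ hsmul hfrac k
  refine ⟨s, ?_⟩
  rw [smul_mk_k, h]
  exact (Submodule.Quotient.mk_eq_zero _).2 ⟨r, rfl⟩

end Aux2


section Aux3

variable {R Q : Type u} [Ring R] [Ring Q] (φ : R →+* Q) [Module Rᵐᵒᵖ Q]
variable (hsmul : ∀ (q : Q) (r : R), op r • q = q * φ r)
variable {S : Submonoid R} {M : Type u} [AddCommGroup M] [Module Rᵐᵒᵖ M]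

theorem indep
    (hOre : ∀ (r : R), ∀ s ∈ S, ∃ (r' s' : R), s' ∈ S ∧ r * s' = s * r')
    (hreg : ∀ s ∈ S, IsRegular s) (hinj : Function.Injective φ)
    (x : M) {q q' : Q} {r r' : R} {s t : ↥S}
    (hq : (Submodule.Quotient.mk q : kmod R Q φ hsmul) = Submodule.Quotient.mk q')
    (h1 : q * φ (s : R) = φ r) (h2 : q' * φ (t : R) = φ r') :
    AOf S M s (QuotientAddGroup.mk (op r • x)) =
      AOf S M t (QuotientAddGroup.mk (op r' • x)) := by
  obtain ⟨c, hc⟩ : ∃ c, φ c = q - q' := (Submodule.Quotient.eq _).1 hq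
  obtain ⟨d, e, he, hu⟩ := hOre (s : R) (t : R) t.2
  have huS : (s : R) * e ∈ S := S.mul_mem s.2 he
  set u : ↥S := ⟨(s : R) * e, huS⟩ with hudef
  have h4 : (u : R) = (s : R) * e := rfl
  have h3 : (u : R) = (t : R) * d := hu
  have hsu : s ≤ u := ⟨e, h4⟩
  have htu : t ≤ u := ⟨d, h3⟩
  have e1 : AOf S M s (QuotientAddGroup.mk (op r • x)) =
      AOf S M u (QuotientAddGroup.mk (op e • (op r • x))) := by
    rw [← tfam_mk S hreg hsu e h4, AOf_f]
  have e2 : AOf S M t (QuotientAddGroup.mk (op r' • x)) =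
      AOf S M u (QuotientAddGroup.mk (op d • (op r' • x))) := by
    rw [← tfam_mk S hreg htu d h3, AOf_f]
  rw [e1, e2]
  congr 1
  have key : r * e - r' * d = c * (u : R) := by
    apply hinj
    calc φ (r * e - r' * d) = φ r * φ e - φ r' * φ d := by rw [map_sub, map_mul, map_mul]
      _ = q * (φ (s : R) * φ e) - q' * (φ (t : R) * φ d) := by
          rw [← h1, ← h2, mul_assoc, mul_assoc]
      _ = q * φ ((s : R) * e) - q' * φ ((t : R) * d) := by rw [map_mul, map_mul]
      _ = (q - q') * φ ((s : R) * e) := by rw [← hu, sub_mul]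
      _ = φ (c * (u : R)) := by rw [← hc, ← map_mul]
  refine (QuotientAddGroup.eq_iff_sub_mem.2 ?_)
  refine ⟨op c • x, ?_⟩
  show op ((u : R)) • (op c • x) = _
  rw [← opsmul, ← opsmul, ← opsmul, ← key, op_sub, sub_smul]

/-- The balanced pairing `M × K → colim_s M/Ms` realizing `M ⊗ K`. -/
noncomputable def bmap
    (hfrac : ∀ q : Q, ∃ (r : R) (s : R), s ∈ S ∧ q * φ s = φ r)
    (x : M) (k : kmod R Q φ hsmul) : ALim S M :=
  AOf S M (kdata φ hsmul hfrac k).choose_spec.choose_spec.choose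
    (QuotientAddGroup.mk (op (kdata φ hsmul hfrac k).choose_spec.choose • x))

theorem bmap_spec
    (hOre : ∀ (r : R), ∀ s ∈ S, ∃ (r' s' : R), s' ∈ S ∧ r * s' = s * r')
    (hreg : ∀ s ∈ S, IsRegular s) (hinj : Function.Injective φ)
    (hfrac : ∀ q : Q, ∃ (r : R) (s : R), s ∈ S ∧ q * φ s = φ r)
    (x : M) {k : kmod R Q φ hsmul} {q : Q} {r : R} {s : ↥S}
    (hq : Submodule.Quotient.mk q = k) (h1 : q * φ (s : R) = φ r) :
    bmap φ hsmul hfrac x k = AOf S M s (QuotientAddGroup.mk (op r • x)) := by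
  obtain ⟨hq₀, h₀⟩ := (kdata φ hsmul hfrac k).choose_spec.choose_spec.choose_spec
  exact indep φ hsmul hOre hreg hinj x (by rw [hq₀, hq]) h₀ h1

theorem bmap_add_x
    (hOre : ∀ (r : R), ∀ s ∈ S, ∃ (r' s' : R), s' ∈ S ∧ r * s' = s * r')
    (hreg : ∀ s ∈ S, IsRegular s) (hinj : Function.Injective φ)
    (hfrac : ∀ q : Q, ∃ (r : R) (s : R), s ∈ S ∧ q * φ s = φ r)
    (x y : M) (k : kmod R Q φ hsmul) :
    bmap φ hsmul hfrac (x + y) k = bmap φ hsmul hfrac x k + bmap φ hsmul hfrac y k := by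
  obtain ⟨q, r, s, hq, h1⟩ := kdata φ hsmul hfrac k
  rw [bmap_spec φ hsmul hOre hreg hinj hfrac (x + y) hq h1,
    bmap_spec φ hsmul hOre hreg hinj hfrac x hq h1, bmap_spec φ hsmul hOre hreg hinj hfrac y hq h1,
    smul_add]
  rw [show (QuotientAddGroup.mk (op r • x + op r • y) : M ⧸ msub M (s : R)) =
    QuotientAddGroup.mk (op r • x) + QuotientAddGroup.mk (op r • y) from rfl, map_add]

theorem bmap_add_k
    (hOre : ∀ (r : R), ∀ s ∈ S, ∃ (r' s' : R), s' ∈ S ∧ r * s' = s * r')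
    (hreg : ∀ s ∈ S, IsRegular s) (hinj : Function.Injective φ)
    (hfrac : ∀ q : Q, ∃ (r : R) (s : R), s ∈ S ∧ q * φ s = φ r)
    (x : M) (k k' : kmod R Q φ hsmul) :
    bmap φ hsmul hfrac x (k + k') = bmap φ hsmul hfrac x k + bmap φ hsmul hfrac x k' := by
  obtain ⟨q, r, s, hq, h1⟩ := kdata φ hsmul hfrac k
  obtain ⟨q', r', t, hq', h2⟩ := kdata φ hsmul hfrac k'
  obtain ⟨d, e, he, hu⟩ := hOre (s : R) (t : R) t.2
  have huS : (s : R) * e ∈ S := S.mul_mem s.2 he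
  set u : ↥S := ⟨(s : R) * e, huS⟩ with hudef
  have h4 : (u : R) = (s : R) * e := rfl
  have h3 : (u : R) = (t : R) * d := hu
  have hsu : s ≤ u := ⟨e, h4⟩
  have htu : t ≤ u := ⟨d, h3⟩
  have ee1 : q * φ ((u : R)) = φ (r * e) := by
    rw [h4, map_mul, ← mul_assoc, h1, ← map_mul]
  have ee2 : q' * φ ((u : R)) = φ (r' * d) := by
    rw [h3, map_mul, ← mul_assoc, h2, ← map_mul]
  have hcom : (q + q') * φ (u : R) = φ (r * e + r' * d) := by
    rw [add_mul, ee1, ee2, map_add]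
  have hqq : (Submodule.Quotient.mk (q + q') : kmod R Q φ hsmul) = k + k' := by
    rw [← hq, ← hq']; exact Submodule.Quotient.mk_add _
  rw [bmap_spec φ hsmul hOre hreg hinj hfrac x hqq hcom,
    bmap_spec φ hsmul hOre hreg hinj hfrac x hq h1, bmap_spec φ hsmul hOre hreg hinj hfrac x hq' h2]
  rw [← AOf_f S hsu (QuotientAddGroup.mk (op r • x)), ← AOf_f S htu (QuotientAddGroup.mk (op r' • x))]
  rw [tfam_mk S hreg hsu e h4, tfam_mk S hreg htu d h3]
  rw [← map_add]
  congr 1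
  rw [show (QuotientAddGroup.mk (op e • (op r • x)) + QuotientAddGroup.mk (op d • (op r' • x)) :
      M ⧸ msub M (u : R)) = QuotientAddGroup.mk (op e • (op r • x) + op d • (op r' • x)) from rfl]
  congr 1
  rw [← opsmul, ← opsmul, op_add, add_smul]

theorem bmap_bal
    (hOre : ∀ (r : R), ∀ s ∈ S, ∃ (r' s' : R), s' ∈ S ∧ r * s' = s * r')
    (hreg : ∀ s ∈ S, IsRegular s) (hinj : Function.Injective φ)
    (hfrac : ∀ q : Q, ∃ (r : R) (s : R), s ∈ S ∧ q * φ s = φ r)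
    (x : M) (r₀ : R) (k : kmod R Q φ hsmul) :
    bmap φ hsmul hfrac (op r₀ • x) k = bmap φ hsmul hfrac x (lmulK R Q φ hsmul r₀ k) := by
  obtain ⟨q, r, s, hq, h1⟩ := kdata φ hsmul hfrac k
  have hq2 : (Submodule.Quotient.mk (φ r₀ * q) : kmod R Q φ hsmul) = lmulK R Q φ hsmul r₀ k := by
    rw [← hq, lmulK_mk]
  have h2 : (φ r₀ * q) * φ (s : R) = φ (r₀ * r) := by
    rw [mul_assoc, h1, ← map_mul]
  rw [bmap_spec φ hsmul hOre hreg hinj hfrac x hq2 h2,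
    bmap_spec φ hsmul hOre hreg hinj hfrac (op r₀ • x) hq h1]
  congr 1
  rw [show (QuotientAddGroup.mk (op r • (op r₀ • x)) : M ⧸ msub M (s : R)) =
    QuotientAddGroup.mk (op (r₀ * r) • x) from by rw [opsmul]]

theorem bmap_crux
    (hOre : ∀ (r : R), ∀ s ∈ S, ∃ (r' s' : R), s' ∈ S ∧ r * s' = s * r')
    (hreg : ∀ s ∈ S, IsRegular s) (hinj : Function.Injective φ)
    (hfrac : ∀ q : Q, ∃ (r : R) (s : R), s ∈ S ∧ q * φ s = φ r)
    (hsat : ∀ a b : R, a * b ∈ S → a ∈ S)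
    (hunit : ∀ s ∈ S, IsUnit (φ s))
    (htf : ∀ s ∈ S, ∀ x : M, op s • x = 0 → x = 0)
    (s : ↥S) {v : Q} (hv : v * φ (s : R) = 1)
    (p : M) (h : bmap φ hsmul hfrac p (Submodule.Quotient.mk v) = 0) :
    ∃ n : M, p = op (s : R) • n := by
  have h1 : v * φ (s : R) = φ 1 := by rw [hv, map_one]
  rw [bmap_spec φ hsmul hOre hreg hinj hfrac p rfl h1] at h
  rw [show (QuotientAddGroup.mk (op (1 : R) • p) : M ⧸ msub M (s : R)) =
    QuotientAddGroup.mk p from by rw [op_one, one_smul]] at h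
  obtain ⟨t, hst, ht⟩ := AOf_zero_exact S hreg hOre h
  obtain ⟨a, ha⟩ := id hst
  rw [tfam_mk S hreg hst a ha] at ht
  obtain ⟨n, hn⟩ := (QuotientAddGroup.eq_zero_iff _).1 ht
  -- hn : op (t : R) • n = op a • p
  have haU : IsUnit (φ a) := by
    have h5 : IsUnit (φ (t : R)) := hunit _ t.2
    rw [ha, map_mul] at h5
    exact isUnit_right_of_isUnit_mul h5 (hunit _ s.2)
  have haS : a ∈ S := memS_of_isUnit φ hsat hinj hfrac haU
  refine ⟨n, ?_⟩
  have h6 : op a • (p - op (s : R) • n) = 0 := by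
    have hn' : op (t : R) • n = op a • p := hn
    rw [smul_sub, ← opsmul, ← ha, hn', sub_self]
  exact sub_eq_zero.1 (htf a haS _ h6)


end Aux3


section Aux5

variable {R Q : Type u} [Ring R] [Ring Q] (φ : R →+* Q) [Module Rᵐᵒᵖ Q]
variable (hsmul : ∀ (q : Q) (r : R), op r • q = q * φ r)
variable {S : Submonoid R} {M T : Type u} [AddCommGroup M] [Module Rᵐᵒᵖ M]
variable [AddCommGroup T] [Module Rᵐᵒᵖ T]

theorem usub_le (htf : ∀ s ∈ S, ∀ x : M, op s • x = 0 → x = 0)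
    {a : R} (haS : a ∈ S) (s u : R) (hu : u = s * a) :
    usub R M u ≤ usub R M s := by
  intro x hx
  have hx' : ∀ r : R, ∃ m : M, op r • x = op u • m := hx
  intro r
  obtain ⟨n, hn⟩ := hx' (r * a)
  refine ⟨n, ?_⟩
  have h6 : op a • (op r • x - op s • n) = 0 := by
    rw [smul_sub, ← opsmul, ← opsmul, hn, ← hu, sub_self]
  exact sub_eq_zero.1 (htf a haS _ h6)

theorem beta_sub {β : M → kmod R Q φ hsmul → T}
    (hβ1 : ∀ x y k, β (x + y) k = β x k + β y k) (x y : M) (k : kmod R Q φ hsmul) :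
    β (x - y) k = β x k - β y k := by
  have h := hβ1 (x - y) y k
  rw [sub_add_cancel] at h
  exact eq_sub_of_add_eq h.symm

theorem beta_zero_k {β : M → kmod R Q φ hsmul → T}
    (hβ2 : ∀ x k k', β x (k + k') = β x k + β x k') (m : M) : β m 0 = 0 := by
  have h := hβ2 m 0 0
  rw [add_zero] at h
  exact add_eq_right.1 h.symm

theorem vanish (hunit : ∀ s ∈ S, IsUnit (φ s))
    {β : M → kmod R Q φ hsmul → T}
    (hβ2 : ∀ x k k', β x (k + k') = β x k + β x k')
    (hbal : ∀ (x : M) (r : R) (k : kmod R Q φ hsmul),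
      β (op r • x) k = β x (lmulK R Q φ hsmul r k))
    (s : ↥S) {k : kmod R Q φ hsmul} (hk : op (s : R) • k = 0)
    {m : M} (hm : m ∈ usub R M (s : R)) : β m k = 0 := by
  obtain ⟨q, rfl⟩ := Submodule.Quotient.mk_surjective _ k
  rw [smul_mk_k] at hk
  obtain ⟨r₀, hr₀⟩ := (Submodule.Quotient.mk_eq_zero _).1 hk
  set v : Q := ↑(hunit _ s.2).unit⁻¹ with hvdef
  have hv1 : φ (s : R) * v = 1 := (hunit _ s.2).mul_val_inv
  have hlm : lmulK R Q φ hsmul r₀ (Submodule.Quotient.mk v) = Submodule.Quotient.mk q := by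
    rw [lmulK_mk, hr₀, mul_assoc, hv1, mul_one]
  have hm' : ∀ r : R, ∃ mm : M, op r • m = op (s : R) • mm := hm
  obtain ⟨m', hmm⟩ := hm' r₀
  calc β m (Submodule.Quotient.mk q) = β m (lmulK R Q φ hsmul r₀ (Submodule.Quotient.mk v)) := by
        rw [hlm]
    _ = β (op r₀ • m) (Submodule.Quotient.mk v) := (hbal m r₀ _).symm
    _ = β (op (s : R) • m') (Submodule.Quotient.mk v) := by rw [hmm]
    _ = β m' (lmulK R Q φ hsmul (s : R) (Submodule.Quotient.mk v)) := hbal m' _ _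
    _ = β m' 0 := by rw [lmulK_mk, hv1, mk_one_k]
    _ = 0 := beta_zero_k φ hsmul hβ2 m'

theorem beta_congr (hunit : ∀ s ∈ S, IsUnit (φ s))
    {β : M → kmod R Q φ hsmul → T}
    (hβ1 : ∀ x y k, β (x + y) k = β x k + β y k)
    (hβ2 : ∀ x k k', β x (k + k') = β x k + β x k')
    (hbal : ∀ (x : M) (r : R) (k : kmod R Q φ hsmul),
      β (op r • x) k = β x (lmulK R Q φ hsmul r k))
    (s : ↥S) {k : kmod R Q φ hsmul} (hk : op (s : R) • k = 0)
    {m m' : M} (h : m - m' ∈ usub R M (s : R)) : β m k = β m' k := by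
  have h1 : β (m - m') k = 0 := vanish φ hsmul hunit hβ2 hbal s hk h
  rw [beta_sub φ hsmul hβ1] at h1
  exact sub_eq_zero.1 h1

theorem common0
    (hOre : ∀ (r : R), ∀ s ∈ S, ∃ (r' s' : R), s' ∈ S ∧ r * s' = s * r')
    (s t : ↥S) : ∃ (u : ↥S) (a b : R), (u : R) = (s : R) * a ∧ (u : R) = (t : R) * b := by
  obtain ⟨r', s', hs', h⟩ := hOre (s : R) (t : R) t.2
  exact ⟨⟨(s : R) * s', S.mul_mem s.2 hs'⟩, s', r', rfl, h⟩

theorem common3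
    (hOre : ∀ (r : R), ∀ s ∈ S, ∃ (r' s' : R), s' ∈ S ∧ r * s' = s * r')
    (hsat : ∀ a b : R, a * b ∈ S → a ∈ S) (hinj : Function.Injective φ)
    (hfrac : ∀ q : Q, ∃ (r : R) (s : R), s ∈ S ∧ q * φ s = φ r)
    (hunit : ∀ s ∈ S, IsUnit (φ s))
    (s t : ↥S) : ∃ (u : ↥S) (a b : R), a ∈ S ∧ b ∈ S ∧
      (u : R) = (s : R) * a ∧ (u : R) = (t : R) * b := by
  obtain ⟨r', s', hs', h⟩ := hOre (t : R) (s : R) s.2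
  refine ⟨⟨(t : R) * s', S.mul_mem t.2 hs'⟩, r', s', ?_, hs', h, rfl⟩
  have h5 : IsUnit (φ ((s : R) * r')) := by rw [← h]; exact hunit _ (S.mul_mem t.2 hs')
  rw [map_mul] at h5
  exact memS_of_isUnit φ hsat hinj hfrac (isUnit_right_of_isUnit_mul h5 (hunit _ s.2))

/-- The lift `λ̃ : M̃ → Hom(K, T)` as a bare function. -/
noncomputable def Ftil
    (hfrac : ∀ q : Q, ∃ (r : R) (s : R), s ∈ S ∧ q * φ s = φ r)
    (β : M → kmod R Q φ hsmul → T)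
    (x : ucompletionSub R M S) (k : kmod R Q φ hsmul) : T :=
  β (Submodule.Quotient.mk_surjective _
      (x.1 (hKtor φ hsmul hfrac k).choose)).choose k

theorem Fspec
    (hOre : ∀ (r : R), ∀ s ∈ S, ∃ (r' s' : R), s' ∈ S ∧ r * s' = s * r')
    (hsat : ∀ a b : R, a * b ∈ S → a ∈ S) (hinj : Function.Injective φ)
    (hfrac : ∀ q : Q, ∃ (r : R) (s : R), s ∈ S ∧ q * φ s = φ r)
    (hunit : ∀ s ∈ S, IsUnit (φ s))
    (htf : ∀ s ∈ S, ∀ x : M, op s • x = 0 → x = 0)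
    {β : M → kmod R Q φ hsmul → T}
    (hβ1 : ∀ x y k, β (x + y) k = β x k + β y k)
    (hβ2 : ∀ x k k', β x (k + k') = β x k + β x k')
    (hbal : ∀ (x : M) (r : R) (k : kmod R Q φ hsmul),
      β (op r • x) k = β x (lmulK R Q φ hsmul r k))
    (x : ucompletionSub R M S) (k : kmod R Q φ hsmul)
    (s : ↥S) (hk : op (s : R) • k = 0)
    (m : M) (hm : Submodule.Quotient.mk m = x.1 s) :
    Ftil φ hsmul hfrac β x k = β m k := by
  set s₀ := (hKtor φ hsmul hfrac k).choose with hs₀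
  have hk₀ : op ((s₀ : ↥S) : R) • k = 0 := (hKtor φ hsmul hfrac k).choose_spec
  set m₀ := (Submodule.Quotient.mk_surjective _ (x.1 s₀)).choose with hm₀def
  have hm₀ : Submodule.Quotient.mk m₀ = x.1 s₀ :=
    (Submodule.Quotient.mk_surjective _ (x.1 s₀)).choose_spec
  obtain ⟨u, a, b, haS, hbS, hua, hub⟩ := common3 φ hOre hsat hinj hfrac hunit s s₀
  have hus : usub R M (u : R) ≤ usub R M (s : R) := usub_le htf haS _ _ hua
  have hus₀ : usub R M (u : R) ≤ usub R M ((s₀ : ↥S) : R) := usub_le htf hbS _ _ hub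
  have hku : op (u : R) • k = 0 := by rw [hua, opsmul, hk, smul_zero]
  obtain ⟨mu, hmu⟩ := Submodule.Quotient.mk_surjective _ (x.1 u)
  have hcomp : ∀ (a b : ↥S) (h : usub R M (b : R) ≤ usub R M (a : R)),
      factorQ R M h (x.1 b) = x.1 a := x.2
  have c1 : x.1 s = Submodule.Quotient.mk mu := by
    rw [← hcomp s u hus, ← hmu, factorQ, Submodule.mapQ_apply, LinearMap.id_apply]
  have c2 : x.1 s₀ = Submodule.Quotient.mk mu := by
    rw [← hcomp s₀ u hus₀, ← hmu, factorQ, Submodule.mapQ_apply, LinearMap.id_apply]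
  have d1 : β m k = β mu k := by
    refine beta_congr φ hsmul hunit hβ1 hβ2 hbal s hk ?_
    exact (Submodule.Quotient.eq _).1 (hm.trans c1)
  have d2 : β m₀ k = β mu k := by
    refine beta_congr φ hsmul hunit hβ1 hβ2 hbal s₀ hk₀ ?_
    exact (Submodule.Quotient.eq _).1 (hm₀.trans c2)
  show β m₀ k = β m k
  rw [d1, d2]

end Aux5


theorem stmt4 (R Q : Type u) [Ring R] [Ring Q] (S : Submonoid R) (φ : R →+* Q)
    [Module Rᵐᵒᵖ Q] (hsmul : ∀ (q : Q) (r : R), op r • q = q * φ r)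
    (hsat : ∀ a b : R, a * b ∈ S → a ∈ S)
    (hOre : ∀ (r : R), ∀ s ∈ S, ∃ (r' s' : R), s' ∈ S ∧ r * s' = s * r')
    (hreg : ∀ s ∈ S, IsRegular s)
    (hdf : ∀ a b : Q, a * b = 1 → b * a = 1)
    (hinj : Function.Injective φ)
    (hunit : ∀ s ∈ S, IsUnit (φ s))
    (hfrac : ∀ q : Q, ∃ (r : R) (s : R), s ∈ S ∧ q * φ s = φ r)
    (M T : Type u) [AddCommGroup M] [Module Rᵐᵒᵖ M] [AddCommGroup T] [Module Rᵐᵒᵖ T]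
    -- `M` is torsion-free
    (htf : ∀ s ∈ S, ∀ x : M, op s • x = 0 → x = 0)
    -- `T` is the tensor product `M ⊗_R K`
    (β : M → kmod R Q φ hsmul → T)
    (hβ1 : ∀ x y k, β (x + y) k = β x k + β y k)
    (hβ2 : ∀ x k k', β x (k + k') = β x k + β x k')
    (hbal : ∀ (x : M) (r : R) (k : kmod R Q φ hsmul),
      β (op r • x) k = β x (lmulK R Q φ hsmul r k))
    (hlin : ∀ (x : M) (r : R) (k : kmod R Q φ hsmul), β x (op r • k) = op r • β x k)
    (huniv : ∀ (A : Type u) [AddCommGroup A] (b : M → kmod R Q φ hsmul → A),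
      (∀ x y k, b (x + y) k = b x k + b y k) →
      (∀ x k k', b x (k + k') = b x k + b x k') →
      (∀ (x : M) (r : R) (k : kmod R Q φ hsmul),
        b (op r • x) k = b x (lmulK R Q φ hsmul r k)) →
      ∃! h : T →+ A, ∀ x k, h (β x k) = b x k) :
    -- there is an injective homomorphism `λ̃ : M̃ → Hom(K, M ⊗ K)` of right `R`-modules
    -- with `λ = λ̃ ∘ η`
    ∃ lamTilde : ucompletionSub R M S → (kmod R Q φ hsmul →ₗ[Rᵐᵒᵖ] T),
      (∀ x y : ucompletionSub R M S, lamTilde (x + y) = lamTilde x + lamTilde y) ∧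
      (∀ (r : R) (x : ucompletionSub R M S),
        lamTilde (op r • x) = (lamTilde x).comp (lmulK R Q φ hsmul r)) ∧
      Function.Injective lamTilde ∧
      (∀ x : M, lamTilde (etaFun R M S x) = lam R Q φ hsmul M T β hβ2 hlin x) := by
  classical
  obtain ⟨θ, hθ, -⟩ := huniv (ALim S M) (bmap φ hsmul hfrac)
    (fun x y k => bmap_add_x φ hsmul hOre hreg hinj hfrac x y k)
    (fun x k k' => bmap_add_k φ hsmul hOre hreg hinj hfrac x k k')
    (fun x r k => bmap_bal φ hsmul hOre hreg hinj hfrac x r k)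
  have fspec := Fspec φ hsmul hOre hsat hinj hfrac hunit htf hβ1 hβ2 hbal
  have ktor := hKtor φ hsmul hfrac
  set F := Ftil φ hsmul hfrac β with hF
  have FaddK : ∀ x (k k' : kmod R Q φ hsmul), F x (k + k') = F x k + F x k' := by
    intro x k k'
    obtain ⟨s, hs⟩ := ktor k
    obtain ⟨t, ht⟩ := ktor k'
    obtain ⟨u, a, b, hua, hub⟩ := common0 hOre s t
    have hku : op (u : R) • k = 0 := by rw [hua, opsmul, hs, smul_zero]
    have hku' : op (u : R) • k' = 0 := by rw [hub, opsmul, ht, smul_zero]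
    have hkuk : op (u : R) • (k + k') = 0 := by rw [smul_add, hku, hku', add_zero]
    obtain ⟨mu, hmu⟩ := Submodule.Quotient.mk_surjective _ (x.1 u)
    rw [fspec x (k + k') u hkuk mu hmu, fspec x k u hku mu hmu, fspec x k' u hku' mu hmu]
    exact hβ2 mu k k'
  have FsmulK : ∀ x (r : R) (k : kmod R Q φ hsmul), F x (op r • k) = op r • F x k := by
    intro x r k
    obtain ⟨s, hs⟩ := ktor k
    obtain ⟨r', s', hs', hrs⟩ := hOre r (s : R) s.2
    have ht : op ((⟨s', hs'⟩ : ↥S) : R) • (op r • k) = 0 := by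
      show op s' • (op r • k) = 0
      rw [← opsmul, hrs, opsmul, hs, smul_zero]
    obtain ⟨u, a, b, hua, hub⟩ := common0 hOre s ⟨s', hs'⟩
    have hku : op (u : R) • k = 0 := by rw [hua, opsmul, hs, smul_zero]
    have hkur : op (u : R) • (op r • k) = 0 := by rw [hub, opsmul, ht, smul_zero]
    obtain ⟨mu, hmu⟩ := Submodule.Quotient.mk_surjective _ (x.1 u)
    rw [fspec x (op r • k) u hkur mu hmu, fspec x k u hku mu hmu]
    exact hlin mu r k
  have FaddX : ∀ x y (k : kmod R Q φ hsmul), F (x + y) k = F x k + F y k := by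
    intro x y k
    obtain ⟨s, hs⟩ := ktor k
    obtain ⟨m, hm⟩ := Submodule.Quotient.mk_surjective _ (x.1 s)
    obtain ⟨n, hn⟩ := Submodule.Quotient.mk_surjective _ (y.1 s)
    have hmn : Submodule.Quotient.mk (m + n) = (x + y).1 s := by
      have h7 : (x + y).1 s = x.1 s + y.1 s := rfl
      rw [h7, ← hm, ← hn]
      exact Submodule.Quotient.mk_add _
    rw [fspec (x + y) k s hs (m + n) hmn, fspec x k s hs m hm, fspec y k s hs n hn]
    exact hβ1 m n k
  have FsmulX : ∀ (r : R) x (k : kmod R Q φ hsmul),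
      F (op r • x) k = F x (lmulK R Q φ hsmul r k) := by
    intro r x k
    obtain ⟨s, hs⟩ := ktor k
    have hs2 : op ((s : ↥S) : R) • lmulK R Q φ hsmul r k = 0 := by
      rw [← LinearMap.map_smul, hs, map_zero]
    obtain ⟨m, hm⟩ := Submodule.Quotient.mk_surjective _ (x.1 s)
    have hm2 : Submodule.Quotient.mk (op r • m) = (op r • x).1 s := by
      have h7 : (op r • x).1 s = op r • (x.1 s) := rfl
      rw [h7, ← hm]
      exact Submodule.Quotient.mk_smul _ _ _
    rw [fspec (op r • x) k s hs (op r • m) hm2,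
      fspec x (lmulK R Q φ hsmul r k) s hs2 m hm]
    exact hbal m r k
  have Feta : ∀ (z : M) (k : kmod R Q φ hsmul), F (etaFun R M S z) k = β z k := by
    intro z k
    obtain ⟨s, hs⟩ := ktor k
    exact fspec (etaFun R M S z) k s hs z rfl
  have Finj : ∀ x y, (∀ k, F x k = F y k) → x = y := by
    intro x y h
    apply Subtype.ext
    funext s
    obtain ⟨m, hm⟩ := Submodule.Quotient.mk_surjective _ (x.1 s)
    obtain ⟨n, hn⟩ := Submodule.Quotient.mk_surjective _ (y.1 s)
    have key : ∀ r : R, ∃ p : M, op r • (m - n) = op (s : R) • p := by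
      intro r
      have hu := hunit _ s.2
      have hv2 : (↑hu.unit⁻¹ : Q) * φ (s : R) = 1 := hu.val_inv_mul
      have hann : op ((s : R)) •
          (Submodule.Quotient.mk (↑hu.unit⁻¹ : Q) : kmod R Q φ hsmul) = 0 := by
        rw [smul_mk_k, hv2, mk_one_k]
      have hannr : op ((s : R)) •
          lmulK R Q φ hsmul r (Submodule.Quotient.mk (↑hu.unit⁻¹ : Q)) = 0 := by
        rw [← LinearMap.map_smul, hann, map_zero]
      have h1 := fspec x (lmulK R Q φ hsmul r (Submodule.Quotient.mk (↑hu.unit⁻¹ : Q)))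
        s hannr m hm
      have h2 := fspec y (lmulK R Q φ hsmul r (Submodule.Quotient.mk (↑hu.unit⁻¹ : Q)))
        s hannr n hn
      have h3 : β (m - n) (lmulK R Q φ hsmul r
          (Submodule.Quotient.mk (↑hu.unit⁻¹ : Q))) = 0 := by
        rw [beta_sub φ hsmul hβ1, ← h1, ← h2, h _, sub_self]
      have h4 : β (op r • (m - n)) (Submodule.Quotient.mk (↑hu.unit⁻¹ : Q)) = 0 := by
        rw [hbal]
        exact h3
      have h5 : bmap φ hsmul hfrac (op r • (m - n))
          (Submodule.Quotient.mk (↑hu.unit⁻¹ : Q)) = 0 := by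
        rw [← hθ, h4, map_zero]
      exact bmap_crux φ hsmul hOre hreg hinj hfrac hsat hunit htf s hv2 _ h5
    show x.1 s = y.1 s
    rw [← hm, ← hn]
    exact (Submodule.Quotient.eq _).2 key
  refine ⟨fun x =>
    { toFun := F x
      map_add' := FaddK x
      map_smul' := fun c k => by
        simp only [RingHom.id_apply]
        rw [← op_unop c]
        exact FsmulK x c.unop k }, ?_, ?_, ?_, ?_⟩
  · intro x y
    refine LinearMap.ext fun k => ?_
    exact FaddX x y k
  · intro r x
    refine LinearMap.ext fun k => ?_
    exact FsmulX r x k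
  · intro x y hxy
    exact Finj x y fun k => DFunLike.congr_fun hxy k
  · intro z
    refine LinearMap.ext fun k => ?_
    exact Feta z k
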